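/- arXiv:1705.07551 — 2 statements merged into one kernel-verified Lean document; each statement's English description precedes it below -/
import Mathlib

section
/- Let G be a graph with list assignment L, and initial and target proper L-colorings f_ini, f_tar. Suppose H_1 and H_2 are disjoint identical induced subgraphs of G (identical with respect to lists and also satisfying f_ini(v) = f_ini(φ(v)) and f_tar(v) = f_tar(φ(v)) under the isomorphism φ). Then f_ini and f_tar are reconfigurable in G if and only if their restrictions to G \ V(H_2) are reconfigurable in G \ V(H_2) with the restricted lists. -/
/-- `f` is a proper list coloring of `G` with respect to the list assignment `L`. -/
def IsProperListColoring {V C : Type*} (G : SimpleGraph V) (L : V → Set C) (f : V → C) : Prop :=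
  (∀ v, f v ∈ L v) ∧ ∀ u v, G.Adj u v → f u ≠ f v

/-- Two colorings are adjacent: they differ at exactly one vertex. -/
def ColAdjacent {V α : Type*} (f f' : V → α) : Prop :=
  ∃ v, f v ≠ f' v ∧ ∀ u, u ≠ v → f u = f' u

/-- One reconfiguration step between proper `L`-colorings of `G`. -/
def ReconfStep {V α : Type*} (G : SimpleGraph V) (L : V → Set α) (f f' : V → α) : Prop :=
  IsProperListColoring G L f ∧ IsProperListColoring G L f' ∧ ColAdjacent f f'

/-- `f` and `f'` are connected by a reconfiguration sequence of proper `L`-colorings. -/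
def Reconfigurable {V α : Type*} (G : SimpleGraph V) (L : V → Set α) (f f' : V → α) : Prop :=
  Relation.ReflTransGen (ReconfStep G L) f f'

section Aux

variable {V α : Type*} {S₁ S₂ : Set V}

open Classical in
/-- Extend a coloring of `S₂ᶜ` to all of `V` by copying values through `φ`. -/
noncomputable def extCol (hdisj : Disjoint S₁ S₂) (φ : S₁ ≃ S₂) (g : ↥S₂ᶜ → α) : V → α :=
  fun v =>
    if h : v ∈ S₂ then
      g ⟨(φ.symm ⟨v, h⟩ : S₁), Set.disjoint_left.mp hdisj (φ.symm ⟨v, h⟩).2⟩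
    else g ⟨v, h⟩

variable (hdisj : Disjoint S₁ S₂) (φ : S₁ ≃ S₂)

include hdisj in
lemma memC_of_mem_S₁ (w : S₁) : (w : V) ∈ S₂ᶜ := Set.disjoint_left.mp hdisj w.2

lemma extCol_notmem (g : ↥S₂ᶜ → α) {v : V} (h : v ∉ S₂) :
    extCol hdisj φ g v = g ⟨v, h⟩ := by
  unfold extCol; exact dif_neg h

lemma extCol_mem (g : ↥S₂ᶜ → α) {v : V} (h : v ∈ S₂) :
    extCol hdisj φ g v
      = g ⟨(φ.symm ⟨v, h⟩ : S₁), Set.disjoint_left.mp hdisj (φ.symm ⟨v, h⟩).2⟩ := by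
  unfold extCol; exact dif_pos h

lemma extCol_img (g : ↥S₂ᶜ → α) (w : S₁) :
    extCol hdisj φ g (φ w) = g ⟨(w : V), memC_of_mem_S₁ hdisj w⟩ := by
  rw [extCol_mem hdisj φ g (φ w).2]
  congr 1
  ext
  simp

variable (G : SimpleGraph V) (L : V → Set α)
  (hiso : ∀ v w : S₁, G.Adj v w ↔ G.Adj (φ v) (φ w))
  (hnbr : ∀ v : S₁, G.neighborSet v \ S₁ = G.neighborSet (φ v) \ S₂)
  (hL : ∀ v : S₁, L v = L (φ v))

lemma induce_adj'' {s : Set V} {a b : ↥s} (h : G.Adj a b) : (G.induce s).Adj a b := h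

include hdisj hnbr in
lemma notmem_S₂_of_adj_S₁ (w : S₁) (u : V) (hadj : G.Adj w u) : u ∉ S₂ := by
  intro hu
  have h1 : u ∉ S₁ := fun hu1 => Set.disjoint_left.mp hdisj hu1 hu
  have h2 : u ∈ G.neighborSet w \ S₁ := ⟨hadj, h1⟩
  rw [hnbr] at h2
  exact h2.2 hu

include hiso in
lemma adj_symm_img (w : S₁) (u : S₂) (h : G.Adj (φ w) u) : G.Adj w (φ.symm u) := by
  rw [hiso w (φ.symm u)]
  simpa using h

include hnbr in
lemma adj_of_adj_img_notmem (w : S₁) (u : V) (hu : u ∉ S₂) (h : G.Adj (φ w) u) :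
    G.Adj w u := by
  have h2 : u ∈ G.neighborSet (φ w) \ S₂ := ⟨h, hu⟩
  rw [← hnbr] at h2
  exact h2.1

include hdisj hiso hnbr hL in
lemma extCol_proper (g : ↥S₂ᶜ → α)
    (hg : IsProperListColoring (G.induce S₂ᶜ) (fun v => L v) g) :
    IsProperListColoring G L (extCol hdisj φ g) := by
  obtain ⟨hmem, hadj⟩ := hg
  constructor
  · intro v
    by_cases h : v ∈ S₂
    · rw [extCol_mem hdisj φ g h]
      have hL' := hL (φ.symm ⟨v, h⟩)
      simp only [Equiv.apply_symm_apply] at hL'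
      rw [← hL']
      exact hmem ⟨_, Set.disjoint_left.mp hdisj (φ.symm ⟨v, h⟩).2⟩
    · rw [extCol_notmem hdisj φ g h]
      exact hmem ⟨v, h⟩
  · intro u v huv
    by_cases hu : u ∈ S₂ <;> by_cases hv : v ∈ S₂
    · rw [extCol_mem hdisj φ g hu, extCol_mem hdisj φ g hv]
      refine hadj _ _ (induce_adj'' G ?_)
      show G.Adj ((φ.symm ⟨u, hu⟩ : S₁) : V) ((φ.symm ⟨v, hv⟩ : S₁) : V)
      rw [hiso]
      simpa using huv
    · rw [extCol_mem hdisj φ g hu, extCol_notmem hdisj φ g hv]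
      refine hadj _ _ (induce_adj'' G ?_)
      show G.Adj ((φ.symm ⟨u, hu⟩ : S₁) : V) v
      refine adj_of_adj_img_notmem φ G hnbr _ _ hv ?_
      simpa using huv
    · rw [extCol_notmem hdisj φ g hu, extCol_mem hdisj φ g hv]
      refine hadj _ _ (induce_adj'' G ?_)
      show G.Adj u ((φ.symm ⟨v, hv⟩ : S₁) : V)
      refine (adj_of_adj_img_notmem φ G hnbr _ _ hu ?_).symm
      simpa using huv.symm
    · rw [extCol_notmem hdisj φ g hu, extCol_notmem hdisj φ g hv]
      exact hadj ⟨u, hu⟩ ⟨v, hv⟩ (induce_adj'' G huv)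

include hdisj hiso hnbr hL in
lemma lift_step (g g' : ↥S₂ᶜ → α)
    (h : ReconfStep (G.induce S₂ᶜ) (fun v => L v) g g') :
    Reconfigurable G L (extCol hdisj φ g) (extCol hdisj φ g') := by
  classical
  obtain ⟨hg, hg', w, hw, hother⟩ := h
  have hgp := extCol_proper hdisj φ G L hiso hnbr hL g hg
  have hg'p := extCol_proper hdisj φ G L hiso hnbr hL g' hg'
  have hwS₂ : (w : V) ∉ S₂ := w.2
  by_cases hw1 : (w : V) ∈ S₁
  · -- two steps: first change w, then its copy φ w
    set w1 : S₁ := ⟨(w : V), hw1⟩ with hw1def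
    set m : V → α := Function.update (extCol hdisj φ g') ((φ w1 : S₂) : V) (g w) with hmdef
    have hφw1S₂ : ((φ w1 : S₂) : V) ∈ S₂ := (φ w1).2
    have hwne : (w : V) ≠ ((φ w1 : S₂) : V) := fun h => hwS₂ (h ▸ hφw1S₂)
    -- m agrees with extCol g' away from φ w1
    have hm_ne : ∀ v : V, v ≠ ((φ w1 : S₂) : V) → m v = extCol hdisj φ g' v :=
      fun v hv => Function.update_of_ne hv _ _
    have hm_at : m ((φ w1 : S₂) : V) = g w := Function.update_self _ _ _
    -- extCol g agrees with extCol g' away from w and φ w1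
    have hgg' : ∀ v : V, v ≠ (w : V) → v ≠ ((φ w1 : S₂) : V) →
        extCol hdisj φ g v = extCol hdisj φ g' v := by
      intro v hv1 hv2
      by_cases h : v ∈ S₂
      · rw [extCol_mem hdisj φ g h, extCol_mem hdisj φ g' h]
        apply hother
        intro heq
        apply hv2
        have hval : ((φ.symm ⟨v, h⟩ : S₁) : V) = ((w : ↥S₂ᶜ) : V) := congrArg Subtype.val heq
        have h3 : φ.symm ⟨v, h⟩ = w1 := Subtype.ext hval
        have h4 := congrArg (fun x => ((φ x : S₂) : V)) h3
        simpa using h4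
      · rw [extCol_notmem hdisj φ g h, extCol_notmem hdisj φ g' h]
        exact hother _ (fun heq => hv1 (congrArg Subtype.val heq))
    have hextg_at_φ : extCol hdisj φ g ((φ w1 : S₂) : V) = g w := by
      rw [extCol_img hdisj φ g w1]
    have hextg'_at_φ : extCol hdisj φ g' ((φ w1 : S₂) : V) = g' w := by
      rw [extCol_img hdisj φ g' w1]
    have hextg_at_w : extCol hdisj φ g (w : V) = g w := by
      rw [extCol_notmem hdisj φ g hwS₂]
    have hextg'_at_w : extCol hdisj φ g' (w : V) = g' w := by
      rw [extCol_notmem hdisj φ g' hwS₂]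
    -- w has no neighbors in S₂
    have hwnbr : ∀ u : V, G.Adj (w : V) u → u ∉ S₂ :=
      fun u hu => notmem_S₂_of_adj_S₁ hdisj φ G hnbr w1 u hu
    -- properness of m
    have hm_proper : IsProperListColoring G L m := by
      constructor
      · intro v
        by_cases h : v = ((φ w1 : S₂) : V)
        · subst h
          rw [hm_at]
          have hL' := hL w1
          rw [← hL']
          exact hg.1 w
        · rw [hm_ne v h]
          exact hg'p.1 v
      · have key : ∀ u : V, G.Adj ((φ w1 : S₂) : V) u → u ≠ ((φ w1 : S₂) : V) →
            m ((φ w1 : S₂) : V) ≠ m u := by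
          intro u hadj hne
          rw [hm_at, hm_ne u hne]
          by_cases h : u ∈ S₂
          · -- u = φ b for some b ∈ S₁, adjacent to w1
            have hb := adj_symm_img φ G hiso w1 ⟨u, h⟩ hadj
            set b : S₁ := φ.symm ⟨u, h⟩ with hbdef
            have hbne : ((b : V)) ≠ (w : V) := by
              intro heq
              apply hne
              have h3 : b = w1 := Subtype.ext heq
              rw [hbdef] at h3
              have h4 := congrArg (fun x => ((φ x : S₂) : V)) h3
              simpa using h4
            rw [extCol_mem hdisj φ g' h]
            have : g' ⟨(b : V), memC_of_mem_S₁ hdisj b⟩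
                = g ⟨(b : V), memC_of_mem_S₁ hdisj b⟩ :=
              (hother _ (fun heq => hbne (congrArg Subtype.val heq))).symm
            rw [this]
            exact hg.2 w ⟨(b : V), memC_of_mem_S₁ hdisj b⟩ (induce_adj'' G hb)
          · -- u outside S₂: adjacent to w1 directly
            have hadj' := adj_of_adj_img_notmem φ G hnbr w1 u h hadj
            have hune : u ≠ (w : V) := by
              intro heq
              subst heq
              exact G.irrefl hadj'
            rw [extCol_notmem hdisj φ g' h]
            have : g' ⟨u, h⟩ = g ⟨u, h⟩ :=
              (hother _ (fun heq => hune (congrArg Subtype.val heq))).symm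
            rw [this]
            exact hg.2 w ⟨u, h⟩ (induce_adj'' G hadj')
        intro u v huv
        by_cases hu : u = ((φ w1 : S₂) : V) <;> by_cases hv : v = ((φ w1 : S₂) : V)
        · subst hu
          rw [hv] at huv
          exact absurd huv G.irrefl
        · subst hu
          exact key v huv hv
        · subst hv
          exact (key u huv.symm hu).symm
        · rw [hm_ne u hu, hm_ne v hv]
          exact hg'p.2 u v huv
    -- step 1 : extCol g → m  (change at w)
    have step1 : ReconfStep G L (extCol hdisj φ g) m := by
      refine ⟨hgp, hm_proper, ⟨(w : V), ?_, ?_⟩⟩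
      · rw [hextg_at_w, hm_ne _ hwne, hextg'_at_w]
        simpa using hw
      · intro u hu
        by_cases h : u = ((φ w1 : S₂) : V)
        · rw [h, hextg_at_φ, hm_at]
        · rw [hm_ne u h]
          exact hgg' u hu h
    -- step 2 : m → extCol g'  (change at φ w1)
    have step2 : ReconfStep G L m (extCol hdisj φ g') := by
      refine ⟨hm_proper, hg'p, ⟨((φ w1 : S₂) : V), ?_, ?_⟩⟩
      · rw [hm_at, hextg'_at_φ]
        simpa using hw
      · intro u hu
        rw [hm_ne u hu]
    exact (Relation.ReflTransGen.single step1).tail step2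
  · -- single step
    refine Relation.ReflTransGen.single ⟨hgp, hg'p, ⟨(w : V), ?_, ?_⟩⟩
    · rw [extCol_notmem hdisj φ g hwS₂, extCol_notmem hdisj φ g' hwS₂]
      have : (⟨(w : V), hwS₂⟩ : ↥S₂ᶜ) = w := Subtype.ext rfl
      rw [this]
      exact hw
    · intro u hu
      by_cases h : u ∈ S₂
      · rw [extCol_mem hdisj φ g h, extCol_mem hdisj φ g' h]
        apply hother
        intro heq
        apply hw1
        rw [← congrArg Subtype.val heq]
        exact (φ.symm ⟨u, h⟩).2
      · rw [extCol_notmem hdisj φ g h, extCol_notmem hdisj φ g' h]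
        exact hother _ (fun heq => hu (congrArg Subtype.val heq))

lemma restrict_proper (f : V → α) (hf : IsProperListColoring G L f) :
    IsProperListColoring (G.induce S₂ᶜ) (fun v => L v) (fun v : ↥S₂ᶜ => f v) :=
  ⟨fun v => hf.1 v, fun u v h => hf.2 u v h⟩

lemma restrict_step (f f' : V → α) (h : ReconfStep G L f f') :
    Relation.ReflTransGen (ReconfStep (G.induce S₂ᶜ) (fun v => L v))
      (fun v : ↥S₂ᶜ => f v) (fun v : ↥S₂ᶜ => f' v) := by
  obtain ⟨hf, hf', w, hw, hother⟩ := h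
  by_cases hwm : w ∈ S₂
  · have heq : (fun v : ↥S₂ᶜ => f (v : V)) = fun v : ↥S₂ᶜ => f' (v : V) :=
      funext fun v => hother (v : V) (fun h => v.2 (h ▸ hwm))
    rw [heq]
  · refine Relation.ReflTransGen.single
      ⟨restrict_proper G L f hf, restrict_proper G L f' hf',
        ⟨⟨w, hwm⟩, hw, fun u hu => hother (u : V) (fun h => hu (Subtype.ext h))⟩⟩

end Aux

/-- Reduction rule: if `H₁, H₂` (given by disjoint vertex sets `S₁, S₂`) are identical
induced subgraphs of `G` with respect to the lists and the initial and target colorings,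
then `f_ini` and `f_tar` are reconfigurable in `G` if and only if their restrictions to
`G \ V(H₂)` are reconfigurable there with the restricted lists. -/
theorem reduction_rule {V α : Type*} (G : SimpleGraph V) (L : V → Set α)
    (S₁ S₂ : Set V) (hdisj : Disjoint S₁ S₂)
    (φ : S₁ ≃ S₂)
    (hiso : ∀ v w : S₁, G.Adj v w ↔ G.Adj (φ v) (φ w))
    (hnbr : ∀ v : S₁, G.neighborSet v \ S₁ = G.neighborSet (φ v) \ S₂)
    (hL : ∀ v : S₁, L v = L (φ v))
    (fini ftar : V → α)
    (hini : ∀ v : S₁, fini v = fini (φ v))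
    (htar : ∀ v : S₁, ftar v = ftar (φ v))
    (hfini : IsProperListColoring G L fini)
    (hftar : IsProperListColoring G L ftar) :
    Reconfigurable G L fini ftar ↔
      Reconfigurable (G.induce S₂ᶜ) (fun v => L v)
        (fun v : ↥S₂ᶜ => fini v) (fun v : ↥S₂ᶜ => ftar v) := by
  constructor
  · intro h
    have key : ∀ f f' : V → α, Relation.ReflTransGen (ReconfStep G L) f f' →
        Relation.ReflTransGen (ReconfStep (G.induce S₂ᶜ) (fun v => L v))
          (fun v : ↥S₂ᶜ => f v) (fun v : ↥S₂ᶜ => f' v) := by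
      intro f f' hr
      induction hr with
      | refl => exact Relation.ReflTransGen.refl
      | tail _ hstep ih => exact ih.trans (restrict_step G L _ _ hstep)
    exact key _ _ h
  · intro h
    have key : ∀ g g' : ↥S₂ᶜ → α,
        Relation.ReflTransGen (ReconfStep (G.induce S₂ᶜ) (fun v => L v)) g g' →
        Reconfigurable G L (extCol hdisj φ g) (extCol hdisj φ g') := by
      intro g g' hr
      induction hr with
      | refl => exact Relation.ReflTransGen.refl
      | tail _ hstep ih =>
        exact ih.trans (lift_step hdisj φ G L hiso hnbr hL _ _ hstep)
    have e1 : extCol hdisj φ (fun v : ↥S₂ᶜ => fini v) = fini := by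
      funext v
      by_cases hv : v ∈ S₂
      · rw [extCol_mem hdisj φ _ hv]
        have h2 := hini (φ.symm ⟨v, hv⟩)
        simp only [Equiv.apply_symm_apply] at h2
        exact h2
      · rw [extCol_notmem hdisj φ _ hv]
    have e2 : extCol hdisj φ (fun v : ↥S₂ᶜ => ftar v) = ftar := by
      funext v
      by_cases hv : v ∈ S₂
      · rw [extCol_mem hdisj φ _ hv]
        have h2 := htar (φ.symm ⟨v, hv⟩)
        simp only [Equiv.apply_symm_apply] at h2
        exact h2
      · rw [extCol_notmem hdisj φ _ hv]
    rw [← e1, ← e2]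
    exact key _ _ h
end

section
/- Let G be a graph with list L and weights w : V(G) → ℕ, and let v_1, v_2 be two non-adjacent vertices with N_G(v_1) = N_G(v_2), L(v_1) = L(v_2), f_ini(v_1) = f_ini(v_2), f_tar(v_1) = f_tar(v_2). Define G' = G − v_2 with weights w'(v_1) = w(v_1) + w(v_2) and w'(v) = w(v) otherwise. Then the minimum weighted length of a reconfiguration sequence from f_ini to f_tar in G equals the minimum weighted length of a reconfiguration sequence from the restriction of f_ini to the restriction of f_tar in G' (with +∞ if no sequence exists, on either side). -/
/-- The minimum weighted length (in `ℕ∞`, with `⊤ = +∞` if no sequence exists) of a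
reconfiguration sequence of proper `L`-colorings of `G` from `fs` to `ft`, where
consecutive colorings differ on exactly one vertex and the cost of a step is the weight of
the recolored vertex. -/
noncomputable def OPT {V α : Type*} (G : SimpleGraph V) (L : V → Set α) (w : V → ℕ)
    (fs ft : V → α) : ℕ∞ :=
  sInf {c : ℕ∞ | ∃ (ℓ : ℕ) (f : ℕ → V → α) (rv : ℕ → V),
    f 0 = fs ∧ f ℓ = ft ∧ (∀ i ≤ ℓ, IsProperListColoring G L (f i)) ∧
    (∀ i < ℓ, ∀ u, f i u ≠ f (i + 1) u ↔ u = rv i) ∧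
    c = ∑ i ∈ Finset.range ℓ, (w (rv i) : ℕ∞)}

namespace WRRAux

/-- A reconfiguration chain from `fs` to `ft` of total cost `c`. -/
inductive Chain {V α : Type*} (P : (V → α) → Prop) (w : V → ℕ) :
    (V → α) → (V → α) → ℕ∞ → Prop
  | refl (f : V → α) : Chain P w f f 0
  | step {f h : V → α} (g : V → α) {u : V} {c : ℕ∞}
      (hdiff : ∀ x, f x ≠ g x ↔ x = u) (hg : P g)
      (hc : Chain P w g h c) : Chain P w f h ((w u : ℕ∞) + c)

theorem Chain.cast {V α : Type*} {P : (V → α) → Prop} {w : V → ℕ} {f g : V → α}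
    {c c' : ℕ∞} (h : Chain P w f g c) (e : c = c') : Chain P w f g c' := e ▸ h

theorem Chain.to_seq {V α : Type*} {P : (V → α) → Prop} {w : V → ℕ} (u₀ : V)
    {fs ft : V → α} {c : ℕ∞} (h : Chain P w fs ft c) :
    P fs → ∃ (ℓ : ℕ) (f : ℕ → V → α) (rv : ℕ → V),
      f 0 = fs ∧ f ℓ = ft ∧ (∀ i ≤ ℓ, P (f i)) ∧
      (∀ i < ℓ, ∀ u, f i u ≠ f (i + 1) u ↔ u = rv i) ∧
      c = ∑ i ∈ Finset.range ℓ, (w (rv i) : ℕ∞) := by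
  induction h with
  | refl f =>
    intro hP
    exact ⟨0, fun _ => f, fun _ => u₀, rfl, rfl,
      fun i hi => by simpa [Nat.le_zero.mp hi] using hP,
      fun i hi => by omega, by simp⟩
  | @step f h g u c hdiff hg hc ih =>
    intro hPf
    obtain ⟨ℓ, F, rv, h0, hl, hprop, hdif, hcost⟩ := ih hg
    refine ⟨ℓ + 1, fun i => match i with | 0 => f | (j+1) => F j,
      fun i => match i with | 0 => u | (j+1) => rv j, rfl, hl, ?_, ?_, ?_⟩
    · intro i hi
      match i with
      | 0 => exact hPf
      | (j+1) => exact hprop j (by omega)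
    · intro i hi x
      match i with
      | 0 => simpa [h0] using hdiff x
      | (j+1) => exact hdif j (by omega) x
    · rw [Finset.sum_range_succ']
      simp only []
      rw [← hcost]
      exact (add_comm _ _)

theorem seq_to_chain {V α : Type*} (P : (V → α) → Prop) (w : V → ℕ) :
    ∀ (ℓ : ℕ) (f : ℕ → V → α) (rv : ℕ → V),
      (∀ i ≤ ℓ, P (f i)) → (∀ i < ℓ, ∀ u, f i u ≠ f (i + 1) u ↔ u = rv i) →
      Chain P w (f 0) (f ℓ) (∑ i ∈ Finset.range ℓ, (w (rv i) : ℕ∞))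
  | 0, f, rv, _, _ => by simpa using Chain.refl (f 0)
  | (n+1), f, rv, hprop, hdif => by
    have tail := seq_to_chain P w n (fun i => f (i+1)) (fun i => rv (i+1))
      (fun i hi => hprop (i+1) (by omega)) (fun i hi => hdif (i+1) (by omega))
    have head := Chain.step (f 1) (hdif 0 (by omega)) (hprop 1 (by omega)) tail
    refine head.cast ?_
    rw [Finset.sum_range_succ']
    exact add_comm _ _

theorem OPT_eq_chain {V α : Type*} (G : SimpleGraph V) (L : V → Set α) (w : V → ℕ)
    (u₀ : V) {fs ft : V → α} (hfs : IsProperListColoring G L fs) :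
    OPT G L w fs ft = sInf {c | Chain (IsProperListColoring G L) w fs ft c} := by
  unfold OPT
  congr 1
  ext c
  constructor
  · rintro ⟨ℓ, f, rv, h0, hl, hprop, hdif, hc⟩
    have := seq_to_chain (IsProperListColoring G L) w ℓ f rv hprop hdif
    rw [h0, hl] at this
    exact hc ▸ this
  · intro hchain
    exact Chain.to_seq u₀ hchain hfs

section Reduction

variable {V α : Type*} [DecidableEq V] (G : SimpleGraph V) (L : V → Set α)
  (v₁ v₂ : V)

/-- Extend a coloring of `G - v₂` to `G` by giving `v₂` the color of `v₁`. -/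
def extc (hv₁ : v₁ ∈ ({v₂}ᶜ : Set V)) (g : ({v₂}ᶜ : Set V) → α) : V → α :=
  fun v => if hv : v = v₂ then g ⟨v₁, hv₁⟩ else g ⟨v, by simp [hv]⟩

/-- Project a coloring of `G` to `G - v₂`, with `v₁` taking the color of `v₂`. -/
def proj2 (f : V → α) : ({v₂}ᶜ : Set V) → α :=
  fun u => if (u : V) = v₁ then f v₂ else f u

variable {G L v₁ v₂}

theorem proper_restrict {f : V → α} (hf : IsProperListColoring G L f) :
    IsProperListColoring (G.induce {v₂}ᶜ) (fun v => L v) (fun u => f u) :=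
  ⟨fun u => hf.1 u, fun u v h => hf.2 u v h⟩

variable (hne : v₁ ≠ v₂) (hadj : ¬ G.Adj v₁ v₂)
  (hnbr : G.neighborSet v₁ = G.neighborSet v₂) (hL : L v₁ = L v₂)

theorem nb_iff (hnbr : G.neighborSet v₁ = G.neighborSet v₂) :
    ∀ x, G.Adj v₁ x ↔ G.Adj v₂ x := fun x => by
  rw [← SimpleGraph.mem_neighborSet, ← SimpleGraph.mem_neighborSet, hnbr]

include hne hnbr hL in
theorem proper_proj2 {f : V → α} (hf : IsProperListColoring G L f) :
    IsProperListColoring (G.induce {v₂}ᶜ) (fun v => L v) (proj2 v₁ v₂ f) := by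
  have hnb := nb_iff hnbr
  constructor
  · intro u
    by_cases h : (u : V) = v₁
    · simp only [proj2, if_pos h, h, hL]
      exact hf.1 v₂
    · simpa [proj2, h] using hf.1 u
  · intro u v huv
    have hadj' : G.Adj ↑u ↑v := huv
    unfold proj2
    split_ifs with h1 h2 h2
    · exact absurd ((h1.trans h2.symm) ▸ hadj' : G.Adj ↑u ↑u) (G.irrefl)
    · have : G.Adj v₂ ↑v := (hnb ↑v).mp (h1 ▸ hadj')
      exact hf.2 v₂ ↑v this
    · have : G.Adj v₂ ↑u := (hnb ↑u).mp (h2 ▸ hadj'.symm)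
      exact (hf.2 v₂ ↑u this).symm
    · exact hf.2 ↑u ↑v hadj'

include hne hadj hnbr hL in
theorem proper_extc (hv₁ : v₁ ∈ ({v₂}ᶜ : Set V))
    {g : ({v₂}ᶜ : Set V) → α}
    (hg : IsProperListColoring (G.induce {v₂}ᶜ) (fun v => L v) g) :
    IsProperListColoring G L (extc v₁ v₂ hv₁ g) := by
  have hnb := nb_iff hnbr
  constructor
  · intro v
    unfold extc
    split_ifs with h
    · subst h; rw [← hL]; exact hg.1 ⟨v₁, hv₁⟩
    · exact hg.1 ⟨v, by simp [h]⟩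
  · intro x y hxy
    unfold extc
    split_ifs with h1 h2 h2
    · exact absurd ((h1.trans h2.symm) ▸ hxy : G.Adj x x) (G.irrefl)
    · -- x = v₂, y ≠ v₂
      have hy1 : G.Adj v₁ y := (hnb y).mpr (h1 ▸ hxy)
      have hyne : y ≠ v₁ := by rintro rfl; exact hadj ((h1 ▸ hxy).symm)
      exact hg.2 ⟨v₁, hv₁⟩ ⟨y, by simp [h2]⟩ hy1
    · -- y = v₂, x ≠ v₂
      have hx1 : G.Adj v₁ x := (hnb x).mpr (h2 ▸ hxy).symm
      have hxne : x ≠ v₁ := by rintro rfl; exact hadj (h2 ▸ hxy)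
      exact (hg.2 ⟨v₁, hv₁⟩ ⟨x, by simp [h1]⟩ hx1).symm
    · exact hg.2 ⟨x, by simp [h1]⟩ ⟨y, by simp [h2]⟩ hxy

include hne hadj hnbr hL in
theorem proper_mid (hv₁ : v₁ ∈ ({v₂}ᶜ : Set V))
    {f g : ({v₂}ᶜ : Set V) → α}
    (hf : IsProperListColoring (G.induce {v₂}ᶜ) (fun v => L v) f)
    (hg : IsProperListColoring (G.induce {v₂}ᶜ) (fun v => L v) g)
    (hagree : ∀ x : ({v₂}ᶜ : Set V), (x : V) ≠ v₁ → f x = g x) :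
    IsProperListColoring G L
      (fun v => if v = v₂ then f ⟨v₁, hv₁⟩ else extc v₁ v₂ hv₁ g v) := by
  have hnb := nb_iff hnbr
  constructor
  · intro v
    beta_reduce
    split_ifs with h
    · subst h; rw [← hL]; exact hf.1 ⟨v₁, hv₁⟩
    · simpa [extc, h] using hg.1 ⟨v, by simp [h]⟩
  · intro x y hxy
    beta_reduce
    split_ifs with h1 h2 h2
    · exact absurd ((h1.trans h2.symm) ▸ hxy : G.Adj x x) (G.irrefl)
    · -- x = v₂, y ≠ v₂ : f ⟨v₁⟩ ≠ extc g y
      have hy1 : G.Adj v₁ y := (hnb y).mpr (h1 ▸ hxy)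
      have hyne : y ≠ v₁ := by rintro rfl; exact hadj ((h1 ▸ hxy).symm)
      have : f ⟨v₁, hv₁⟩ ≠ f ⟨y, by simp [h2]⟩ := hf.2 ⟨v₁, hv₁⟩ ⟨y, by simp [h2]⟩ hy1
      rw [hagree ⟨y, by simp [h2]⟩ hyne] at this
      simpa [extc, h2] using this
    · -- y = v₂, x ≠ v₂
      have hx1 : G.Adj v₁ x := (hnb x).mpr (h2 ▸ hxy).symm
      have hxne : x ≠ v₁ := by rintro rfl; exact hadj (h2 ▸ hxy)
      have : f ⟨v₁, hv₁⟩ ≠ f ⟨x, by simp [h1]⟩ := hf.2 ⟨v₁, hv₁⟩ ⟨x, by simp [h1]⟩ hx1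
      rw [hagree ⟨x, by simp [h1]⟩ hxne] at this
      simpa [extc, h1] using this.symm
    · have := hg.2 ⟨x, by simp [h1]⟩ ⟨y, by simp [h2]⟩ hxy
      simpa [extc, h1, h2] using this

include hne hadj hnbr hL in
theorem chain_lift (hv₁ : v₁ ∈ ({v₂}ᶜ : Set V)) (w : V → ℕ)
    {gs gt : ({v₂}ᶜ : Set V) → α} {c : ℕ∞}
    (h : Chain (IsProperListColoring (G.induce {v₂}ᶜ) (fun v => L v))
      (fun v => if (v : V) = v₁ then w v₁ + w v₂ else w v) gs gt c) :
    IsProperListColoring (G.induce {v₂}ᶜ) (fun v => L v) gs →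
    Chain (IsProperListColoring G L) w (extc v₁ v₂ hv₁ gs) (extc v₁ v₂ hv₁ gt) c := by
  induction h with
  | refl f => exact fun _ => Chain.refl _
  | @step f h g u c hdiff hg hc ih =>
    intro hPf
    have tail := ih hg
    by_cases huv : (u : V) = v₁
    · -- two steps: recolor v₁ then v₂
      set mid : V → α := fun v => if v = v₂ then f ⟨v₁, hv₁⟩ else extc v₁ v₂ hv₁ g v
        with hmid
      have hueq : (⟨v₁, hv₁⟩ : ({v₂}ᶜ : Set V)) = u := Subtype.ext huv.symm
      have hfv : f ⟨v₁, hv₁⟩ ≠ g ⟨v₁, hv₁⟩ := (hdiff ⟨v₁, hv₁⟩).mpr hueq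
      have hagree : ∀ x : ({v₂}ᶜ : Set V), (x : V) ≠ v₁ → f x = g x := by
        intro x hx
        by_contra hc'
        exact hx ((congrArg Subtype.val ((hdiff x).mp hc')).trans huv)
      have hstep1 : ∀ x, extc v₁ v₂ hv₁ f x ≠ mid x ↔ x = v₁ := by
        intro x
        by_cases hx2 : x = v₂
        · refine iff_of_false ?_ (fun hh => hne (hh ▸ hx2))
          simp [hmid, extc, hx2]
        · simp only [hmid, if_neg hx2, extc, dif_neg hx2]
          rw [hdiff ⟨x, by simpa using hx2⟩]
          constructor
          · intro hh; exact (congrArg Subtype.val hh).trans huv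
          · intro hh; exact Subtype.ext (hh.trans huv.symm)
      have hstep2 : ∀ x, mid x ≠ extc v₁ v₂ hv₁ g x ↔ x = v₂ := by
        intro x
        by_cases hx2 : x = v₂
        · refine iff_of_true ?_ hx2
          simpa [hmid, extc, hx2] using hfv
        · refine iff_of_false ?_ hx2
          simp [hmid, hx2]
      have hmidP := proper_mid hne hadj hnbr hL hv₁ hPf hg hagree
      have chain2 := Chain.step (u := v₂) (extc v₁ v₂ hv₁ g) hstep2
        (proper_extc hne hadj hnbr hL hv₁ hg) tail
      have chain1 := Chain.step (u := v₁) mid hstep1 hmidP chain2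
      refine chain1.cast ?_
      rw [if_pos huv]
      push_cast
      ring
    · -- one step
      have hcompat : f ⟨v₁, hv₁⟩ = g ⟨v₁, hv₁⟩ := by
        by_contra hc'
        exact huv (congrArg Subtype.val ((hdiff ⟨v₁, hv₁⟩).mp hc')).symm
      have hune : (u : V) ≠ v₂ := u.2
      have hstep : ∀ x, extc v₁ v₂ hv₁ f x ≠ extc v₁ v₂ hv₁ g x ↔ x = (u : V) := by
        intro x
        by_cases hx2 : x = v₂
        · refine iff_of_false ?_ (fun hh => hune (hh ▸ hx2))
          simp [extc, hx2, hcompat]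
        · simp only [extc, dif_neg hx2]
          rw [hdiff ⟨x, by simpa using hx2⟩]
          exact ⟨fun hh => congrArg Subtype.val hh, fun hh => Subtype.ext hh⟩
      have := Chain.step (u := (u : V)) (extc v₁ v₂ hv₁ g) hstep
        (proper_extc hne hadj hnbr hL hv₁ hg) tail
      refine this.cast ?_
      rw [if_neg huv]

include hne hnbr hL in
theorem chain_project (hv₁ : v₁ ∈ ({v₂}ᶜ : Set V)) (w : V → ℕ)
    {fs ft : V → α} {c : ℕ∞}
    (h : Chain (IsProperListColoring G L) w fs ft c) :
    ∃ S a b : ℕ∞,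
      c = S + a * (w v₁ : ℕ∞) + b * (w v₂ : ℕ∞) ∧
      Chain (IsProperListColoring (G.induce {v₂}ᶜ) (fun v => L v))
        (fun v => if (v : V) = v₁ then w v₁ + w v₂ else w v)
        (fun u => fs ↑u) (fun u => ft ↑u) (S + a * ((w v₁ : ℕ∞) + (w v₂ : ℕ∞))) ∧
      Chain (IsProperListColoring (G.induce {v₂}ᶜ) (fun v => L v))
        (fun v => if (v : V) = v₁ then w v₁ + w v₂ else w v)
        (proj2 v₁ v₂ fs) (proj2 v₁ v₂ ft) (S + b * ((w v₁ : ℕ∞) + (w v₂ : ℕ∞))) := by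
  induction h with
  | refl f =>
    exact ⟨0, 0, 0, by simp, by simpa using Chain.refl _, by simpa using Chain.refl _⟩
  | @step f h g u c hdiff hg hc ih =>
    obtain ⟨S, a, b, he, ch1, ch2⟩ := ih
    by_cases hu1 : u = v₁
    · refine ⟨S, a + 1, b, ?_, ?_, ?_⟩
      · rw [hu1, he]; ring
      · have hstep : ∀ x : ({v₂}ᶜ : Set V), f ↑x ≠ g ↑x ↔ x = ⟨v₁, hv₁⟩ := by
          intro x
          rw [hdiff ↑x, hu1]
          exact ⟨fun hh => Subtype.ext hh, fun hh => congrArg Subtype.val hh⟩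
        have := Chain.step (u := (⟨v₁, hv₁⟩ : ({v₂}ᶜ : Set V))) (fun x : ({v₂}ᶜ : Set V) => g ↑x) hstep (proper_restrict hg) ch1
        refine this.cast ?_
        rw [if_pos rfl]
        push_cast
        ring
      · have hpeq : proj2 v₁ v₂ f = proj2 v₁ v₂ g := by
          funext x
          unfold proj2
          split_ifs with hx
          · by_contra hc'
            exact hne.symm (((hdiff v₂).mp hc').trans hu1)
          · by_contra hc'
            exact hx (((hdiff ↑x).mp hc').trans hu1)
        rw [hpeq]; exact ch2
    · by_cases hu2 : u = v₂
      · refine ⟨S, a, b + 1, ?_, ?_, ?_⟩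
        · rw [hu2, he]; ring
        · have hreq : (fun x : ({v₂}ᶜ : Set V) => f ↑x) = (fun x : ({v₂}ᶜ : Set V) => g ↑x) := by
            funext x
            by_contra hc'
            exact (show (x : V) ≠ v₂ from x.2)
              (((hdiff ↑x).mp hc').trans hu2)
          rw [hreq]; exact ch1
        · have hstep : ∀ x : ({v₂}ᶜ : Set V),
              proj2 v₁ v₂ f x ≠ proj2 v₁ v₂ g x ↔ x = ⟨v₁, hv₁⟩ := by
            intro x
            unfold proj2
            split_ifs with hx
            · exact iff_of_true ((hdiff v₂).mpr hu2.symm) (Subtype.ext hx)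
            · refine iff_of_false ?_ (fun hh => hx (congrArg Subtype.val hh))
              intro hc'
              exact (show (x : V) ≠ v₂ from x.2)
                (((hdiff ↑x).mp hc').trans hu2)
          have := Chain.step (u := (⟨v₁, hv₁⟩ : ({v₂}ᶜ : Set V))) (proj2 v₁ v₂ g) hstep
            (proper_proj2 hne hnbr hL hg) ch2
          refine this.cast ?_
          rw [if_pos rfl]
          push_cast
          ring
      · -- u ∉ {v₁, v₂}
        have humem : u ∈ ({v₂}ᶜ : Set V) := by simpa using hu2
        refine ⟨(w u : ℕ∞) + S, a, b, ?_, ?_, ?_⟩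
        · rw [he]; ring
        · have hstep : ∀ x : ({v₂}ᶜ : Set V), f ↑x ≠ g ↑x ↔ x = ⟨u, humem⟩ := by
            intro x
            rw [hdiff ↑x]
            exact ⟨fun hh => Subtype.ext hh, fun hh => congrArg Subtype.val hh⟩
          have := Chain.step (u := (⟨u, humem⟩ : ({v₂}ᶜ : Set V))) (fun x : ({v₂}ᶜ : Set V) => g ↑x) hstep (proper_restrict hg) ch1
          refine this.cast ?_
          rw [if_neg hu1]
          ring
        · have hstep : ∀ x : ({v₂}ᶜ : Set V),
              proj2 v₁ v₂ f x ≠ proj2 v₁ v₂ g x ↔ x = ⟨u, humem⟩ := by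
            intro x
            unfold proj2
            split_ifs with hx
            · refine iff_of_false (fun hc' => ?_)
                (fun hh => hu1 ((congrArg Subtype.val hh).symm.trans hx))
              exact hu2 ((hdiff v₂).mp hc').symm
            · rw [hdiff ↑x]
              exact ⟨fun hh => Subtype.ext hh, fun hh => congrArg Subtype.val hh⟩
          have := Chain.step (u := (⟨u, humem⟩ : ({v₂}ᶜ : Set V))) (proj2 v₁ v₂ g) hstep
            (proper_proj2 hne hnbr hL hg) ch2
          refine this.cast ?_
          rw [if_neg hu1]
          ring

end Reduction

end WRRAux

/-- Weighted reduction rule: if `v₁, v₂` are non-adjacent vertices with the same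
neighborhood, list, initial color, and target color, then the optimal weighted
reconfiguration length in `G` equals the one in `G - v₂` with the weight of `v₂`
added onto `v₁`. -/
theorem weighted_reduction_rule {V α : Type*} [DecidableEq V]
    (G : SimpleGraph V) (L : V → Set α) (w : V → ℕ)
    (v₁ v₂ : V) (hne : v₁ ≠ v₂) (hadj : ¬ G.Adj v₁ v₂)
    (hnbr : G.neighborSet v₁ = G.neighborSet v₂)
    (hL : L v₁ = L v₂)
    (fini ftar : V → α)
    (hini : fini v₁ = fini v₂) (htar : ftar v₁ = ftar v₂)
    (hfini : IsProperListColoring G L fini)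
    (hftar : IsProperListColoring G L ftar) :
    OPT G L w fini ftar =
      OPT (G.induce {v₂}ᶜ) (fun v => L v)
        (fun v => if (v : V) = v₁ then w v₁ + w v₂ else w v)
        (fun v => fini v) (fun v => ftar v) := by
  classical
  open WRRAux in
  have hv₁ : v₁ ∈ ({v₂}ᶜ : Set V) := by simpa using hne
  have hfini' : IsProperListColoring (G.induce {v₂}ᶜ) (fun v => L v)
      (fun u : ({v₂}ᶜ : Set V) => fini ↑u) := proper_restrict hfini
  have hext_ini : extc v₁ v₂ hv₁ (fun u : ({v₂}ᶜ : Set V) => fini ↑u) = fini := by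
    funext v
    unfold extc
    split_ifs with h
    · subst h; exact hini
    · rfl
  have hext_tar : extc v₁ v₂ hv₁ (fun u : ({v₂}ᶜ : Set V) => ftar ↑u) = ftar := by
    funext v
    unfold extc
    split_ifs with h
    · subst h; exact htar
    · rfl
  have hproj_ini : proj2 v₁ v₂ fini = (fun u : ({v₂}ᶜ : Set V) => fini ↑u) := by
    funext u
    unfold proj2
    split_ifs with h
    · rw [h]; exact hini.symm
    · rfl
  have hproj_tar : proj2 v₁ v₂ ftar = (fun u : ({v₂}ᶜ : Set V) => ftar ↑u) := by
    funext u
    unfold proj2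
    split_ifs with h
    · rw [h]; exact htar.symm
    · rfl
  rw [OPT_eq_chain G L w v₁ hfini,
    OPT_eq_chain (G.induce {v₂}ᶜ) (fun v => L v)
      (fun v => if (v : V) = v₁ then w v₁ + w v₂ else w v) ⟨v₁, hv₁⟩ hfini']
  apply le_antisymm
  · apply le_sInf
    intro c hc
    have := chain_lift hne hadj hnbr hL hv₁ w hc hfini'
    rw [hext_ini, hext_tar] at this
    exact sInf_le this
  · apply le_sInf
    intro c hc
    obtain ⟨S, a, b, he, ch1, ch2⟩ := chain_project hne hnbr hL hv₁ w hc
    rcases le_total a b with hab | hba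
    · refine sInf_le_of_le ch1 ?_
      rw [he, mul_add, ← add_assoc]
      exact add_le_add_right (mul_le_mul_left hab _) _
    · rw [hproj_ini, hproj_tar] at ch2
      refine sInf_le_of_le ch2 ?_
      rw [he, mul_add, ← add_assoc]
      calc S + b * (w v₁ : ℕ∞) + b * (w v₂ : ℕ∞)
          ≤ S + a * (w v₁ : ℕ∞) + b * (w v₂ : ℕ∞) :=
            add_le_add_left (add_le_add_right (mul_le_mul_left hba _) _) _
end
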